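/- For Spin(16), the tensor product Sym^{2k}_0(ℂ^{16}) ⊗ Σ⁺_{16} of the 2k-th harmonic symmetric power of the vector representation with the positive half-spin representation decomposes as the direct sum of the irreducible representations with highest weights (1/2)(4k+1, 1, 1, 1, 1, 1, 1, 1) and (1/2)(4k-1, 1, 1, 1, 1, 1, 1, -1). -/

import Mathlib

/-!
The Weyl-group orbit of `(1/2, …, 1/2)` is the set of weights `ν_T` of `Σ⁺₁₆`, one for each
even set `T` of coordinates to negate, so the half-spin character `χ` is Weyl-invariant and
`A_μ · χ = ∑_T A_{μ + ν_T}` (Brauer–Klimyk). An alternating sum `A_λ` vanishes as soon as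
`λ_i = ± λ_j` for some `i ≠ j`, because the reflection in `e_i ∓ e_j` fixes `λ` and has sign `-1`.
For `μ = λ + ρ` with `λ` supported on the first coordinate, the last seven coordinates of
`μ + ν_T` are those of `ρ + ν_T`, and they collide unless `T = ∅` or `T = {0, 7}` (coordinates
indexed from `0`); these two survivors give `μ₁ + ρ` and `μ₂ + ρ`. For `λ = 0` the survivor
`T = {0, 7}` collides as well, so `A_ρ · χ = A_{λ₂ + ρ}`, and the identity follows by multiplying.
-/

open Finset

/-- The Weyl alternating sum `A_λ = ∑_{w ∈ W(D_8)} sgn(w) e^{w(λ)}` for the root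
system `D_8` of `Spin(16)`, evaluated at `t ∈ ℝ^8` (with `e^μ(t) = exp⟨μ, t⟩`).
The Weyl group of `D_8` consists of permutations combined with an even number of
sign changes. -/
noncomputable def weylAltD8 (lam : Fin 8 → ℝ) (t : Fin 8 → ℝ) : ℝ :=
  ∑ σ : Equiv.Perm (Fin 8),
    ∑ S ∈ Finset.univ.filter (fun S : Finset (Fin 8) => Even S.card),
      ((Equiv.Perm.sign σ : ℤ) : ℝ) *
        Real.exp (∑ i, (if i ∈ S then -lam i else lam i) * t (σ i))

/-- Half-sum of the positive roots of `D_8`: `ρ = (7, 6, …, 1, 0)`. -/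
def rhoD8 : Fin 8 → ℝ := fun i => 7 - (i : ℕ)

open Equiv
open scoped symmDiff

section WeylAlternatingSum

variable {ι : Type*}

def evenSubsets (ι : Type*) [Fintype ι] : Finset (Finset ι) :=
  univ.filter fun S => Even S.card

@[simp]
theorem mem_evenSubsets [Fintype ι] {S : Finset ι} : S ∈ evenSubsets ι ↔ Even S.card := by
  simp [evenSubsets]

theorem sum_evenSubsets_map [Fintype ι] (τ : Perm ι) (f : Finset ι → ℝ) :
    ∑ S ∈ evenSubsets ι, f (S.map τ.toEmbedding) = ∑ S ∈ evenSubsets ι, f S :=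
  sum_equiv τ.finsetCongr (by simp) (by simp)

variable [DecidableEq ι]

theorem even_card_symmDiff_iff (S T : Finset ι) :
    Even (S ∆ T).card ↔ (Even S.card ↔ Even T.card) := by
  have hsub : S ∩ T ⊆ S ∪ T := inter_subset_left.trans subset_union_left
  have hcard : (S ∆ T).card + 2 * (S ∩ T).card = S.card + T.card := by
    rw [symmDiff_eq_sup_sdiff_inf, sup_eq_union, inf_eq_inter, card_sdiff_of_subset hsub,
      ← card_union_add_card_inter S T]
    have := card_le_card hsub
    omega
  rw [← Nat.even_add, ← hcard]
  simp [Nat.even_add]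

def signFlip (S : Finset ι) (lam : ι → ℝ) : ι → ℝ :=
  fun i => if i ∈ S then -lam i else lam i

@[simp]
theorem signFlip_empty (lam : ι → ℝ) : signFlip ∅ lam = lam := by
  ext i
  simp [signFlip]

theorem signFlip_signFlip (S T : Finset ι) (lam : ι → ℝ) :
    signFlip S (signFlip T lam) = signFlip (S ∆ T) lam := by
  ext i
  by_cases hS : i ∈ S <;> by_cases hT : i ∈ T <;> simp [signFlip, mem_symmDiff, hS, hT]

theorem signFlip_add (S : Finset ι) (lam μ : ι → ℝ) :
    signFlip S (lam + μ) = signFlip S lam + signFlip S μ := by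
  ext i
  by_cases hS : i ∈ S <;> simp [signFlip, hS, add_comm]

theorem signFlip_comp_perm (S : Finset ι) (lam : ι → ℝ) (τ : Perm ι) :
    signFlip S (lam ∘ τ) = signFlip (S.map τ.toEmbedding) lam ∘ τ := by
  ext i
  simp [signFlip]

variable [Fintype ι]

noncomputable def weylAltD (lam t : ι → ℝ) : ℝ :=
  ∑ σ : Perm ι, ∑ S ∈ evenSubsets ι,
    ((Perm.sign σ : ℤ) : ℝ) * Real.exp (signFlip S lam ⬝ᵥ (t ∘ σ))

theorem weylAltD8_eq_weylAltD : weylAltD8 = weylAltD := rfl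

theorem sum_evenSubsets_symmDiff {U : Finset ι} (hU : Even U.card) (f : Finset ι → ℝ) :
    ∑ S ∈ evenSubsets ι, f (S ∆ U) = ∑ S ∈ evenSubsets ι, f S :=
  sum_nbij' (· ∆ U) (· ∆ U) (by simp [even_card_symmDiff_iff, hU])
    (by simp [even_card_symmDiff_iff, hU]) (by simp) (by simp) (by simp)

theorem weylAltD_comp_perm (lam t : ι → ℝ) (τ : Perm ι) :
    weylAltD (lam ∘ τ) t = Perm.sign τ * weylAltD lam t := by
  let E (σ : Perm ι) (S : Finset ι) := Real.exp (signFlip S lam ⬝ᵥ (t ∘ σ))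
  have hE (σ : Perm ι) (S : Finset ι) :
      Real.exp (signFlip S (lam ∘ τ) ⬝ᵥ (t ∘ σ)) = E (σ * τ⁻¹) (S.map τ.toEmbedding) := by
    rw [signFlip_comp_perm, ← τ.symm_symm, comp_equiv_symm_dotProduct]
    rfl
  calc weylAltD (lam ∘ τ) t
      = ∑ σ : Perm ι, ((Perm.sign σ : ℤ) : ℝ) * ∑ S ∈ evenSubsets ι, E (σ * τ⁻¹) S := by
        simp only [weylAltD, hE, ← mul_sum, sum_evenSubsets_map τ (E _)]
    _ = ∑ σ : Perm ι, ((Perm.sign (σ * τ) : ℤ) : ℝ) * ∑ S ∈ evenSubsets ι, E σ S :=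
        Fintype.sum_equiv (Equiv.mulRight τ⁻¹) _ _ fun σ => by simp
    _ = Perm.sign τ * weylAltD lam t := by
        simp only [weylAltD, Perm.sign_mul, mul_sum, Units.val_mul, Int.cast_mul]
        refine sum_congr rfl fun σ _ => sum_congr rfl fun S _ => ?_
        ring

theorem weylAltD_signFlip (lam t : ι → ℝ) {U : Finset ι} (hU : Even U.card) :
    weylAltD (signFlip U lam) t = weylAltD lam t := by
  unfold weylAltD
  refine sum_congr rfl fun σ _ => ?_
  simp only [signFlip_signFlip]
  exact sum_evenSubsets_symmDiff hU
    fun S => ((Perm.sign σ : ℤ) : ℝ) * Real.exp (signFlip S lam ⬝ᵥ (t ∘ σ))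

theorem weylAltD_eq_zero_of_eq (lam t : ι → ℝ) {i j : ι} (hij : i ≠ j) (h : lam i = lam j) :
    weylAltD lam t = 0 := by
  have hfix : lam ∘ swap i j = lam := by
    ext m
    rcases eq_or_ne m i with rfl | hi
    · simp [h]
    rcases eq_or_ne m j with rfl | hj
    · simp [h]
    simp [swap_apply_of_ne_of_ne hi hj]
  have hanti := weylAltD_comp_perm lam t (swap i j)
  rw [hfix, Perm.sign_swap hij] at hanti
  push_cast at hanti
  linarith

theorem weylAltD_eq_zero_of_eq_neg (lam t : ι → ℝ) {i j : ι} (hij : i ≠ j)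
    (h : lam i = -lam j) : weylAltD lam t = 0 := by
  have hfix : signFlip {i, j} (lam ∘ swap i j) = lam := by
    ext m
    rcases eq_or_ne m i with rfl | hi
    · simp [signFlip, h]
    rcases eq_or_ne m j with rfl | hj
    · simp [signFlip, h]
    simp [signFlip, swap_apply_of_ne_of_ne hi hj, hi, hj]
  have hanti := weylAltD_comp_perm lam t (swap i j)
  rw [← weylAltD_signFlip _ t (card_pair hij ▸ even_two), hfix, Perm.sign_swap hij] at hanti
  push_cast at hanti
  linarith

end WeylAlternatingSum

section Singular

variable {ι : Type*}

/-- `lam` is orthogonal to a root `e_i ∓ e_j` of `D_n`. -/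
def IsSingularD {R : Type*} [Neg R] (lam : ι → R) : Prop :=
  ∃ i j, i ≠ j ∧ (lam i = lam j ∨ lam i = -lam j)

theorem IsSingularD.of_comp {κ R : Type*} [Neg R] {lam : ι → R} {e : κ → ι}
    (he : Function.Injective e) (h : IsSingularD (lam ∘ e)) : IsSingularD lam := by
  obtain ⟨i, j, hij, hval⟩ := h
  exact ⟨e i, e j, he.ne hij, hval⟩

theorem IsSingularD.map {R R' : Type*} [Neg R] [Neg R'] {lam : ι → R} (f : R → R')
    (hf : ∀ a, f (-a) = -f a) (h : IsSingularD lam) : IsSingularD (f ∘ lam) := by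
  obtain ⟨i, j, hij, hval | hval⟩ := h
  · exact ⟨i, j, hij, Or.inl (by simp [hval])⟩
  · exact ⟨i, j, hij, Or.inr (by simp [hval, hf])⟩

theorem weylAltD_eq_zero_of_isSingularD [Fintype ι] [DecidableEq ι] {lam : ι → ℝ}
    (h : IsSingularD lam) (t : ι → ℝ) : weylAltD lam t = 0 := by
  obtain ⟨i, j, hij, hval | hval⟩ := h
  · exact weylAltD_eq_zero_of_eq lam t hij hval
  · exact weylAltD_eq_zero_of_eq_neg lam t hij hval

end Singular

section HalfSpin

variable {ι : Type*} [Fintype ι] [DecidableEq ι]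

theorem weylAltD_mul_sum_exp {κ : Type*} (s : Finset κ) (ν : κ → ι → ℝ) (μ t : ι → ℝ)
    (hν : ∀ σ : Perm ι, ∀ S ∈ evenSubsets ι,
      ∑ c ∈ s, Real.exp (signFlip S (ν c) ⬝ᵥ (t ∘ σ)) = ∑ c ∈ s, Real.exp (ν c ⬝ᵥ t)) :
    weylAltD μ t * ∑ c ∈ s, Real.exp (ν c ⬝ᵥ t) = ∑ c ∈ s, weylAltD (μ + ν c) t := by
  calc weylAltD μ t * ∑ c ∈ s, Real.exp (ν c ⬝ᵥ t)
      = ∑ σ : Perm ι, ∑ S ∈ evenSubsets ι, ∑ c ∈ s,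
          ((Perm.sign σ : ℤ) : ℝ) * Real.exp (signFlip S (μ + ν c) ⬝ᵥ (t ∘ σ)) := by
        rw [weylAltD, sum_mul]
        refine sum_congr rfl fun σ _ => ?_
        rw [sum_mul]
        refine sum_congr rfl fun S hS => ?_
        rw [← hν σ S hS, mul_sum]
        refine sum_congr rfl fun c _ => ?_
        rw [signFlip_add, add_dotProduct, Real.exp_add, mul_assoc]
    _ = ∑ c ∈ s, weylAltD (μ + ν c) t :=
        (sum_congr rfl fun σ _ => sum_comm).trans sum_comm

noncomputable def halfSpinWeight (T : Finset ι) : ι → ℝ :=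
  signFlip T fun _ => 1 / 2

noncomputable def halfSpinChar (t : ι → ℝ) : ℝ :=
  ∑ T ∈ evenSubsets ι, Real.exp (halfSpinWeight T ⬝ᵥ t)

theorem sum_exp_signFlip_halfSpinWeight (σ : Perm ι) {S : Finset ι} (hS : Even S.card)
    (t : ι → ℝ) :
    ∑ T ∈ evenSubsets ι, Real.exp (signFlip S (halfSpinWeight T) ⬝ᵥ (t ∘ σ)) =
      halfSpinChar t := by
  have hperm (T : Finset ι) :
      halfSpinWeight T ⬝ᵥ (t ∘ σ) = halfSpinWeight (T.map σ.toEmbedding) ⬝ᵥ t := by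
    rw [← comp_equiv_symm_dotProduct]
    congr 1
    ext i
    simp [halfSpinWeight, signFlip]
  have hflip (T : Finset ι) : signFlip S (halfSpinWeight T) = halfSpinWeight (T ∆ S) := by
    rw [halfSpinWeight, signFlip_signFlip, symmDiff_comm, halfSpinWeight]
  simp only [hflip]
  rw [sum_evenSubsets_symmDiff hS fun T => Real.exp (halfSpinWeight T ⬝ᵥ (t ∘ σ))]
  simp only [hperm]
  exact sum_evenSubsets_map σ fun T => Real.exp (halfSpinWeight T ⬝ᵥ t)

theorem weylAltD_mul_halfSpinChar (μ t : ι → ℝ) :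
    weylAltD μ t * halfSpinChar t = ∑ T ∈ evenSubsets ι, weylAltD (μ + halfSpinWeight T) t :=
  weylAltD_mul_sum_exp _ _ μ t fun σ _ hS =>
    sum_exp_signFlip_halfSpinWeight σ (mem_evenSubsets.1 hS) t

theorem weylAltD_mul_halfSpinChar_eq_sum_of_isSingularD (μ t : ι → ℝ) {s : Finset (Finset ι)}
    (hs : s ⊆ evenSubsets ι)
    (hsing : ∀ T ∈ evenSubsets ι, T ∉ s → IsSingularD (μ + halfSpinWeight T)) :
    weylAltD μ t * halfSpinChar t = ∑ T ∈ s, weylAltD (μ + halfSpinWeight T) t := by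
  rw [weylAltD_mul_halfSpinChar, sum_subset hs]
  exact fun T hT hTs => weylAltD_eq_zero_of_isSingularD (hsing T hT hTs) t

end HalfSpin

/-- The coordinates of `2 (ρ + ν_T)`, integral so that singularity can be decided. -/
def twiceRhoAddHalfSpin (T : Finset (Fin 8)) (i : Fin 8) : ℤ :=
  15 - 2 * (i : ℕ) - if i ∈ T then 2 else 0

theorem rhoD8_add_halfSpinWeight (T : Finset (Fin 8)) :
    rhoD8 + halfSpinWeight T = fun i => (twiceRhoAddHalfSpin T i : ℝ) / 2 := by
  ext i
  by_cases hi : i ∈ T <;>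
    simp [rhoD8, halfSpinWeight, signFlip, twiceRhoAddHalfSpin, hi] <;> ring

set_option maxRecDepth 100000 in
theorem isSingularD_twiceRhoAddHalfSpin_comp_succ :
    ∀ T : Finset (Fin 8), Even T.card → T ≠ ∅ → T ≠ {0, 7} →
      IsSingularD (twiceRhoAddHalfSpin T ∘ Fin.succ) := by
  unfold IsSingularD
  decide

theorem weylAltD_add_rhoD8_mul_halfSpinChar {lam : Fin 8 → ℝ} (hlam : ∀ i, i ≠ 0 → lam i = 0)
    (t : Fin 8 → ℝ) :
    weylAltD (lam + rhoD8) t * halfSpinChar t =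
      weylAltD (lam + rhoD8 + halfSpinWeight ∅) t +
        weylAltD (lam + rhoD8 + halfSpinWeight {0, 7}) t := by
  have hsub : ({∅, {0, 7}} : Finset (Finset (Fin 8))) ⊆ evenSubsets (Fin 8) := by
    simp [insert_subset_iff]
  rw [weylAltD_mul_halfSpinChar_eq_sum_of_isSingularD _ t hsub, sum_pair (by decide)]
  intro T hT hTs
  simp only [mem_insert, mem_singleton, not_or] at hTs
  refine IsSingularD.of_comp (Fin.succ_injective 7) ?_
  have hcoord : (lam + rhoD8 + halfSpinWeight T) ∘ Fin.succ =
      (fun n : ℤ => (n : ℝ) / 2) ∘ (twiceRhoAddHalfSpin T ∘ Fin.succ) := by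
    ext i
    simp [hlam i.succ (Fin.succ_ne_zero i), add_assoc, rhoD8_add_halfSpinWeight]
  rw [hcoord]
  refine .map _ (fun n => by push_cast; ring) ?_
  exact isSingularD_twiceRhoAddHalfSpin_comp_succ T (mem_evenSubsets.1 hT) hTs.1 hTs.2

theorem weylAltD_rhoD8_mul_halfSpinChar (t : Fin 8 → ℝ) :
    weylAltD rhoD8 t * halfSpinChar t = weylAltD (rhoD8 + halfSpinWeight ∅) t := by
  have h := weylAltD_add_rhoD8_mul_halfSpinChar (lam := 0) (fun _ _ => rfl) t
  -- the first two coordinates of `ρ + ν_{0,7}` are both `13/2`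
  have hsing : weylAltD (rhoD8 + halfSpinWeight {0, 7}) t = 0 :=
    weylAltD_eq_zero_of_eq _ t (i := 0) (j := 1) (by decide) (by
      simp [rhoD8, halfSpinWeight, signFlip]; norm_num)
  simpa [hsing] using h

/-- Via the Weyl character formula `χ_λ = A_{λ+ρ}/A_ρ`, and since representations of the compact
group `Spin(16)` are determined by their characters, the decomposition is the identity
`A_{λ₁+ρ} · A_{λ₂+ρ} = (A_{μ₁+ρ} + A_{μ₂+ρ}) · A_ρ`. -/
theorem spin16_sym_tensor_halfspin_decomp_general (k : ℕ) (t : Fin 8 → ℝ) :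
    let lam₁ : Fin 8 → ℝ := fun i => if (i : ℕ) = 0 then 2 * (k : ℝ) else 0
    let lam₂ : Fin 8 → ℝ := fun _ => 1 / 2
    let μ₁ : Fin 8 → ℝ := fun i =>
      if (i : ℕ) = 0 then (4 * (k : ℝ) + 1) / 2 else 1 / 2
    let μ₂ : Fin 8 → ℝ := fun i =>
      if (i : ℕ) = 0 then (4 * (k : ℝ) - 1) / 2
      else if (i : ℕ) = 7 then -(1 / 2) else 1 / 2
    weylAltD8 (fun i => lam₁ i + rhoD8 i) t * weylAltD8 (fun i => lam₂ i + rhoD8 i) t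
      = (weylAltD8 (fun i => μ₁ i + rhoD8 i) t
          + weylAltD8 (fun i => μ₂ i + rhoD8 i) t) * weylAltD8 rhoD8 t := by
  intro lam₁ lam₂ μ₁ μ₂
  have hρ : weylAltD rhoD8 t * halfSpinChar t = weylAltD (lam₂ + rhoD8) t := by
    rw [weylAltD_rhoD8_mul_halfSpinChar, add_comm]
    simp [lam₂, halfSpinWeight]
  have hlam₁ := weylAltD_add_rhoD8_mul_halfSpinChar (lam := lam₁)
    (fun _ hi => if_neg (Fin.val_ne_zero_iff.2 hi)) t
  have e₁ : lam₁ + rhoD8 + halfSpinWeight ∅ = μ₁ + rhoD8 := by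
    ext i
    fin_cases i <;> simp [lam₁, μ₁, halfSpinWeight] <;> ring
  have e₂ : lam₁ + rhoD8 + halfSpinWeight {0, 7} = μ₂ + rhoD8 := by
    ext i
    fin_cases i <;> simp [lam₁, μ₂, halfSpinWeight, signFlip] <;> ring
  rw [e₁, e₂] at hlam₁
  rw [weylAltD8_eq_weylAltD]
  change weylAltD (lam₁ + rhoD8) t * weylAltD (lam₂ + rhoD8) t =
    (weylAltD (μ₁ + rhoD8) t + weylAltD (μ₂ + rhoD8) t) * weylAltD rhoD8 t
  rw [← hρ, ← hlam₁]
  ring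

/-- For `Spin(16)`, the tensor product `Sym^{2k}₀(ℂ^{16}) ⊗ Σ⁺₁₆` of the `2k`-th
harmonic symmetric power of the vector representation (highest weight `(2k,0,…,0)`)
with the positive half-spin representation (highest weight `(1/2)(1,…,1)`) decomposes
as the direct sum of the irreducibles with highest weights
`(1/2)(4k+1,1,1,1,1,1,1,1)` and `(1/2)(4k-1,1,1,1,1,1,1,-1)`.  Via the Weyl character
formula (`χ_λ = A_{λ+ρ}/A_ρ`), and since representations of the compact group
`Spin(16)` are determined by their characters, this is the identity
`A_{(2k,0,…,0)+ρ} · A_{(1/2)(1,…,1)+ρ} = (A_{μ₁+ρ} + A_{μ₂+ρ}) · A_ρ`. -/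
theorem spin16_sym_tensor_halfspin_decomp (k : ℕ) (hk : 1 ≤ k) (t : Fin 8 → ℝ) :
    let lam₁ : Fin 8 → ℝ := fun i => if (i : ℕ) = 0 then 2 * (k : ℝ) else 0
    let lam₂ : Fin 8 → ℝ := fun _ => 1 / 2
    let μ₁ : Fin 8 → ℝ := fun i =>
      if (i : ℕ) = 0 then (4 * (k : ℝ) + 1) / 2 else 1 / 2
    let μ₂ : Fin 8 → ℝ := fun i =>
      if (i : ℕ) = 0 then (4 * (k : ℝ) - 1) / 2
      else if (i : ℕ) = 7 then -(1 / 2) else 1 / 2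
    weylAltD8 (fun i => lam₁ i + rhoD8 i) t * weylAltD8 (fun i => lam₂ i + rhoD8 i) t
      = (weylAltD8 (fun i => μ₁ i + rhoD8 i) t
          + weylAltD8 (fun i => μ₂ i + rhoD8 i) t) * weylAltD8 rhoD8 t :=
  spin16_sym_tensor_halfspin_decomp_general k t
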